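/- arXiv:2411.04200 — 8 statements merged into one kernel-verified Lean document; each statement's English description precedes it below -/
import Mathlib

section
/- Let D be a finite type, x : D → ℝ binary, and U : Option D → ℝ injective with U g > 0 for every g : Option D. If ŵ ∈ Δ maximizes F₁ over Δ (i.e., F₁(ŵ) ≥ F₁(w) for every w ∈ Δ) and w̃ ∈ W(x) maximizes F₂ over W(x) (i.e., F₂(w̃) ≥ F₂(w) for every w ∈ W(x)), then ŵ = w̃. -/
noncomputable section

/-- Feasible set `W(x)` of the follower problem. -/
def Wset {D : Type*} [Fintype D] (x : D → ℝ) : Set (Option D → ℝ) :=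
  {w | (∀ g, 0 ≤ w g) ∧ (∑ g : Option D, w g = 1) ∧ ∀ d : D, w (some d) ≤ x d}

/-- Standard simplex `Δ`. -/
def simplex (D : Type*) [Fintype D] : Set (Option D → ℝ) :=
  {w | (∀ g, 0 ≤ w g) ∧ ∑ g : Option D, w g = 1}

/-- The finite set `A(x)` of available options: home delivery (`none`) together with
the open facilities (`some d` with `x d = 1`). -/
def Afin {D : Type*} [Fintype D] [DecidableEq D] (x : D → ℝ) : Finset (Option D) :=
  insert none ((Finset.univ.filter (fun d : D => x d = 1)).image Option.some)

lemma Afin_nonempty {D : Type*} [Fintype D] [DecidableEq D] (x : D → ℝ) :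
    (Afin x).Nonempty := Finset.insert_nonempty _ _

/-- `max_{a ∈ A(x)} U a`. -/
def maxA {D : Type*} [Fintype D] [DecidableEq D] (x : D → ℝ) (U : Option D → ℝ) : ℝ :=
  (Afin x).sup' (Afin_nonempty x) U

/-- Objective `F₁` of the first follower formulation. -/
def F1 {D : Type*} [Fintype D] (U : Option D → ℝ) (x : D → ℝ) (w : Option D → ℝ) : ℝ :=
  ∑ d : D, U (some d) * x d * w (some d) + U none * w none

/-- Objective `F₂` of the second follower formulation. -/
def F2 {D : Type*} [Fintype D] (U : Option D → ℝ) (w : Option D → ℝ) : ℝ :=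
  ∑ g : Option D, U g * w g

/-- Indicator vector `e_a`. -/
def indic {D : Type*} [DecidableEq D] (a : Option D) : Option D → ℝ :=
  fun g => if g = a then 1 else 0

/-- Key lemma: a feasible point of the simplex whose linear objective value reaches
the strict unique maximum coefficient must be the corresponding indicator. -/
lemma key_lemma {D : Type*} [Fintype D] [DecidableEq D] (c : Option D → ℝ) (M : ℝ) (a : Option D)
    (hca : c a = M) (hlt : ∀ g, g ≠ a → c g < M)
    (w : Option D → ℝ) (h0 : ∀ g, 0 ≤ w g) (h1 : ∑ g : Option D, w g = 1)
    (hF : M ≤ ∑ g : Option D, c g * w g) :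
    ∀ g, w g = if g = a then 1 else 0 := by
  have hle : ∀ g, c g ≤ M := by
    intro g
    by_cases hg : g = a
    · simp [hg, hca]
    · exact (hlt g hg).le
  have hsum0 : ∑ g : Option D, (M - c g) * w g = 0 := by
    have heq : ∑ g : Option D, (M - c g) * w g
        = M * (∑ g : Option D, w g) - ∑ g : Option D, c g * w g := by
      rw [Finset.mul_sum, ← Finset.sum_sub_distrib]
      exact Finset.sum_congr rfl (fun g _ => by ring)
    have hge : (0:ℝ) ≤ ∑ g : Option D, (M - c g) * w g :=
      Finset.sum_nonneg fun g _ => mul_nonneg (sub_nonneg.2 (hle g)) (h0 g)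
    have : ∑ g : Option D, (M - c g) * w g ≤ 0 := by
      rw [heq, h1]; linarith
    linarith
  have hzero : ∀ g ∈ Finset.univ, (M - c g) * w g = 0 :=
    (Finset.sum_eq_zero_iff_of_nonneg
      (fun g _ => mul_nonneg (sub_nonneg.2 (hle g)) (h0 g))).1 hsum0
  have hwz : ∀ g, g ≠ a → w g = 0 := by
    intro g hg
    have := hzero g (Finset.mem_univ g)
    rcases mul_eq_zero.1 this with h | h
    · exact absurd h (by have := hlt g hg; intro hc; linarith)
    · exact h
  have hwa : w a = 1 := by
    have : ∑ g : Option D, w g = w a :=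
      Finset.sum_eq_single_of_mem a (Finset.mem_univ a) (fun b _ hb => hwz b hb)
    rw [this] at h1; exact h1
  intro g
  by_cases hg : g = a
  · simp [hg, hwa]
  · simp [hg, hwz g hg]

theorem stmt0 {D : Type*} [Fintype D] (x : D → ℝ) (hx : ∀ d, x d = 0 ∨ x d = 1)
    (U : Option D → ℝ) (hUinj : Function.Injective U) (hUpos : ∀ g, 0 < U g)
    (what wtil : Option D → ℝ)
    (hwhat : what ∈ simplex D) (hwtil : wtil ∈ Wset x)
    (hmax1 : ∀ w ∈ simplex D, F1 U x w ≤ F1 U x what)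
    (hmax2 : ∀ w ∈ Wset x, F2 U w ≤ F2 U wtil) :
    what = wtil := by
  classical
  set M : ℝ := maxA x U with hM
  obtain ⟨a, haA, haU⟩ := Finset.exists_mem_eq_sup' (Afin_nonempty x) U
  have haM : U a = M := haU.symm
  -- coefficient function
  set c : Option D → ℝ := fun g => Option.elim g (U none) (fun d => U (some d) * x d) with hc
  have hxone : ∀ d, some d ∈ Afin x ↔ x d = 1 := by
    intro d
    simp [Afin]
  have hnoneA : (none : Option D) ∈ Afin x := Finset.mem_insert_self _ _
  have hcA : ∀ g ∈ Afin x, c g = U g := by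
    intro g hg
    match g with
    | none => simp [hc]
    | some d =>
      have : x d = 1 := (hxone d).1 hg
      simp [hc, this]
  have hcnA : ∀ g, g ∉ Afin x → c g = 0 := by
    intro g hg
    match g with
    | none => exact absurd hnoneA hg
    | some d =>
      have : x d ≠ 1 := fun h => hg ((hxone d).2 h)
      have hx0 : x d = 0 := (hx d).resolve_right this
      simp [hc, hx0]
  have hMU : ∀ g ∈ Afin x, U g ≤ M := fun g hg => Finset.le_sup' U hg
  have hMpos : 0 < M := lt_of_lt_of_le (hUpos none) (hMU none hnoneA)
  have hca : c a = M := by rw [hcA a haA, haM]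
  have hlt : ∀ g, g ≠ a → c g < M := by
    intro g hg
    by_cases hgA : g ∈ Afin x
    · rw [hcA g hgA]
      exact lt_of_le_of_ne (hMU g hgA) (fun h => hg (hUinj (h.trans haM.symm)))
    · rw [hcnA g hgA]; exact hMpos
  -- F1 as a linear form with coefficients c
  have hF1 : ∀ w : Option D → ℝ, F1 U x w = ∑ g : Option D, c g * w g := by
    intro w
    rw [F1, Fintype.sum_option]
    simp [hc]
    ring
  -- indicator is in simplex and in Wset
  have hind_nonneg : ∀ g, 0 ≤ indic a g := by
    intro g; unfold indic; split <;> norm_num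
  have hind_sum : ∑ g : Option D, indic a g = 1 := by
    simp [indic]
  have hind_simplex : indic a ∈ simplex D := ⟨hind_nonneg, hind_sum⟩
  have hind_W : indic a ∈ Wset x := by
    refine ⟨hind_nonneg, hind_sum, ?_⟩
    intro d
    unfold indic
    by_cases h : (some d : Option D) = a
    · have : x d = 1 := (hxone d).1 (h ▸ haA)
      simp [h, this]
    · rcases hx d with h0 | h1
      · simp [h, h0]
      · simp [h, h1]
  -- F1 value of indicator
  have hF1ind : F1 U x (indic a) = M := by
    rw [hF1]
    have : ∑ g : Option D, c g * indic a g = c a := by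
      simp [indic, mul_ite]
    rw [this, hca]
  have hF2ind : F2 U (indic a) = M := by
    rw [F2]
    have : ∑ g : Option D, U g * indic a g = U a := by
      simp [indic, mul_ite]
    rw [this, haM]
  -- what = indic a
  obtain ⟨hw0, hw1⟩ := hwhat
  have hFwhat : M ≤ ∑ g : Option D, c g * what g := by
    have := hmax1 (indic a) hind_simplex
    rw [hF1ind, hF1 what] at this
    exact this
  have hwhat_eq : ∀ g, what g = if g = a then 1 else 0 :=
    key_lemma c M a hca hlt what hw0 hw1 hFwhat
  -- wtil = indic a
  obtain ⟨ht0, ht1, htx⟩ := hwtil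
  have htzero : ∀ d, x d = 0 → wtil (some d) = 0 := by
    intro d hd
    have h1 := htx d
    have h2 := ht0 (some d)
    linarith [hd ▸ h1]
  have hF2til : F2 U wtil = ∑ g : Option D, c g * wtil g := by
    rw [F2]
    apply Finset.sum_congr rfl
    intro g _
    match g with
    | none => simp [hc]
    | some d =>
      rcases hx d with h0 | h1
      · rw [htzero d h0]; ring
      · simp [hc, h1]
  have hFtil : M ≤ ∑ g : Option D, c g * wtil g := by
    have := hmax2 (indic a) hind_W
    rw [hF2ind, hF2til] at this
    exact this
  have hwtil_eq : ∀ g, wtil g = if g = a then 1 else 0 :=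
    key_lemma c M a hca hlt wtil ht0 ht1 hFtil
  funext g
  rw [hwhat_eq g, hwtil_eq g]

end
end

section
/- Let D be a finite type, x : D → ℝ binary, U : Option D → ℝ, and let M = max_{a ∈ A(x)} U a (which exists since A(x) is a nonempty finite set). For every w ∈ W(x), the strong-duality inequality ∑_{g : Option D} U g · w g ≥ M holds if and only if the closest-assignment constraints hold: for every d ∈ D, ∑_{g : Option D, U g ≥ U (some d)} w g ≥ x d, and ∑_{g : Option D, U g ≥ U none} w g ≥ 1. -/
noncomputable section

theorem stmt1 {D : Type*} [Fintype D] [DecidableEq D]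
    (x : D → ℝ) (hx : ∀ d, x d = 0 ∨ x d = 1)
    (U : Option D → ℝ) (w : Option D → ℝ) (hw : w ∈ Wset x) :
    (∑ g : Option D, U g * w g ≥ maxA x U) ↔
      ((∀ d : D, ∑ g ∈ Finset.univ.filter (fun g : Option D => U g ≥ U (some d)), w g ≥ x d) ∧
       ∑ g ∈ Finset.univ.filter (fun g : Option D => U g ≥ U none), w g ≥ 1) := by
  obtain ⟨hw0, hw1, hwx⟩ := hw
  have hsupp : ∀ g, g ∉ Afin x → w g = 0 := by
    intro g hg
    match g with
    | none => simp [Afin] at hg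
    | some d =>
      have hxd : x d = 0 := by
        rcases hx d with h | h
        · exact h
        · exact absurd (by simp [Afin, h]) hg
      have h1 := hwx d
      have h2 := hw0 (some d)
      linarith
  obtain ⟨a, ha, haU⟩ := Finset.exists_mem_eq_sup' (Afin_nonempty x) U
  have haU' : maxA x U = U a := haU
  have hA1 : ∑ g ∈ Afin x, w g = 1 := by
    rw [← hw1]
    exact Finset.sum_subset (Finset.subset_univ _) (fun g _ hg => hsupp g hg)
  constructor
  · intro h
    -- every option carrying positive weight attains the maximum
    have key : ∀ g, w g ≠ 0 → maxA x U ≤ U g := by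
      by_contra hc
      push_neg at hc
      obtain ⟨g0, hg0ne, hg0lt⟩ := hc
      have hg0A : g0 ∈ Afin x := by
        by_contra hn; exact hg0ne (hsupp g0 hn)
      have hlt : ∑ g ∈ Afin x, U g * w g < ∑ g ∈ Afin x, maxA x U * w g := by
        apply Finset.sum_lt_sum
        · intro g hg
          exact mul_le_mul_of_nonneg_right (Finset.le_sup' U hg) (hw0 g)
        · refine ⟨g0, hg0A, ?_⟩
          have hpos : 0 < w g0 := lt_of_le_of_ne (hw0 g0) (Ne.symm hg0ne)
          exact mul_lt_mul_of_pos_right hg0lt hpos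
      have heq : ∑ g : Option D, U g * w g = ∑ g ∈ Afin x, U g * w g := by
        refine (Finset.sum_subset (Finset.subset_univ _) ?_).symm
        intro g _ hg
        rw [hsupp g hg, mul_zero]
      have hsum : ∑ g ∈ Afin x, maxA x U * w g = maxA x U := by
        rw [← Finset.mul_sum, hA1, mul_one]
      rw [heq] at h
      linarith
    have main : ∀ t : ℝ, t ≤ maxA x U →
        ∑ g ∈ Finset.univ.filter (fun g : Option D => U g ≥ t), w g = 1 := by
      intro t ht
      rw [← hw1]
      refine Finset.sum_subset (Finset.filter_subset _ _) ?_
      intro g _ hg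
      simp only [Finset.mem_filter, Finset.mem_univ, true_and, ge_iff_le, not_le] at hg
      by_contra hne
      have := key g hne
      linarith
    constructor
    · intro d
      rcases hx d with h0 | h1
      · rw [h0]
        exact Finset.sum_nonneg fun g _ => hw0 g
      · have hd : some d ∈ Afin x := by simp [Afin, h1]
        rw [h1, main (U (some d)) (Finset.le_sup' U hd)]
    · have hn : (none : Option D) ∈ Afin x := by simp [Afin]
      rw [main (U none) (Finset.le_sup' U hn)]
  · rintro ⟨hd, hnone⟩
    -- the filter set at level maxA has weight ≥ 1
    have hge : ∑ g ∈ Finset.univ.filter (fun g : Option D => U g ≥ maxA x U), w g ≥ 1 := by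
      cases a with
      | none => rw [haU']; exact hnone
      | some d =>
        have hx1 : x d = 1 := by
          simp only [Afin, Finset.mem_insert, Finset.mem_image, Finset.mem_filter,
            Finset.mem_univ, true_and] at ha
          rcases ha with h | ⟨d', hd', he⟩
          · exact absurd h (by simp)
          · cases Option.some.inj he; exact hd'
        rw [haU']
        calc (1:ℝ) = x d := hx1.symm
          _ ≤ _ := hd d
    set S := Finset.univ.filter (fun g : Option D => U g ≥ maxA x U) with hS
    have hle : ∑ g ∈ S, w g ≤ 1 := by
      rw [← hw1]
      exact Finset.sum_le_sum_of_subset_of_nonneg (Finset.subset_univ _)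
        (fun g _ _ => hw0 g)
    have hS1 : ∑ g ∈ S, w g = 1 := le_antisymm hle hge
    have hzero : ∀ g ∉ S, w g = 0 := by
      intro g hg
      by_contra hne
      have hpos : 0 < w g := lt_of_le_of_ne (hw0 g) (Ne.symm hne)
      have : ∑ g' ∈ insert g S, w g' ≤ 1 := by
        rw [← hw1]
        exact Finset.sum_le_sum_of_subset_of_nonneg (Finset.subset_univ _)
          (fun g' _ _ => hw0 g')
      rw [Finset.sum_insert hg, hS1] at this
      linarith
    have heq : ∑ g : Option D, U g * w g = ∑ g ∈ S, U g * w g := by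
      refine (Finset.sum_subset (Finset.subset_univ _) ?_).symm
      intro g _ hg
      rw [hzero g hg, mul_zero]
    rw [heq]
    calc ∑ g ∈ S, U g * w g ≥ ∑ g ∈ S, maxA x U * w g := by
          refine Finset.sum_le_sum fun g hg => ?_
          simp only [hS, Finset.mem_filter, Finset.mem_univ, true_and, ge_iff_le] at hg
          exact mul_le_mul_of_nonneg_right hg (hw0 g)
      _ = maxA x U := by rw [← Finset.mul_sum, hS1, mul_one]

end
end

section
/- Let D be a finite type, x : D → ℝ binary, and U : Option D → ℝ. Then max_{a ∈ A(x)} U a is the maximum value of F₂ over W(x): there exists w ∈ W(x) with F₂(w) = max_{a ∈ A(x)} U a, and F₂(w) ≤ max_{a ∈ A(x)} U a for every w ∈ W(x). -/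
noncomputable section

lemma mem_Afin_iff {D : Type*} [Fintype D] [DecidableEq D] (x : D → ℝ) (g : Option D) :
    g ∈ Afin x ↔ g = none ∨ ∃ d, x d = 1 ∧ g = some d := by
  simp [Afin, eq_comm]

theorem stmt2 {D : Type*} [Fintype D] [DecidableEq D]
    (x : D → ℝ) (hx : ∀ d, x d = 0 ∨ x d = 1) (U : Option D → ℝ) :
    (∃ w ∈ Wset x, F2 U w = maxA x U) ∧ ∀ w ∈ Wset x, F2 U w ≤ maxA x U := by
  constructor
  · obtain ⟨a, ha, haU⟩ := Finset.exists_mem_eq_sup' (Afin_nonempty x) U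
    refine ⟨indic a, ⟨?_, ?_, ?_⟩, ?_⟩
    · intro g; unfold indic; split <;> norm_num
    · simp [indic]
    · intro d
      by_cases h : (some d : Option D) = a
      · rcases (mem_Afin_iff x a).1 ha with h0 | ⟨d', hd', hd''⟩
        · simp [h0] at h
        · subst hd''
          simp only [Option.some.injEq] at h
          subst h
          simp [indic, hd']
      · simp only [indic, if_neg h]
        rcases hx d with h | h <;> simp [h]
    · simp [F2, indic, maxA, ← haU]
  · intro w ⟨hw0, hw1, hwx⟩
    have hzero : ∀ g ∉ Afin x, w g = 0 := by
      intro g hg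
      rw [mem_Afin_iff] at hg
      push_neg at hg
      obtain ⟨hn, hs⟩ := hg
      cases g with
      | none => exact absurd rfl hn
      | some d =>
        have hxd : x d = 0 := by
          rcases hx d with h0 | h1
          · exact h0
          · exact absurd rfl (hs d h1)
        have := hwx d
        linarith [hw0 (some d)]
    have hsum : ∑ g ∈ Afin x, w g = 1 := by
      rw [← hw1]
      exact Finset.sum_subset (Finset.subset_univ _)
        (fun g _ hg => hzero g hg)
    have : F2 U w = ∑ g ∈ Afin x, U g * w g := by
      unfold F2
      exact (Finset.sum_subset (Finset.subset_univ _)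
        (fun g _ hg => by rw [hzero g hg, mul_zero])).symm
    rw [this]
    calc ∑ g ∈ Afin x, U g * w g ≤ ∑ g ∈ Afin x, maxA x U * w g := by
          apply Finset.sum_le_sum
          intro g hg
          exact mul_le_mul_of_nonneg_right (Finset.le_sup' U hg) (hw0 g)
      _ = maxA x U := by rw [← Finset.mul_sum, hsum, mul_one]

end
end

section
/- Let D be a finite type, x : D → ℝ binary, and U : Option D → ℝ with U g > 0 for every g : Option D. Then max_{a ∈ A(x)} U a is the maximum value of F₁ over Δ: there exists w ∈ Δ with F₁(w) = max_{a ∈ A(x)} U a, and F₁(w) ≤ max_{a ∈ A(x)} U a for every w ∈ Δ. -/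
noncomputable section

theorem stmt3 {D : Type*} [Fintype D] [DecidableEq D]
    (x : D → ℝ) (hx : ∀ d, x d = 0 ∨ x d = 1)
    (U : Option D → ℝ) (hUpos : ∀ g, 0 < U g) :
    (∃ w ∈ simplex D, F1 U x w = maxA x U) ∧ ∀ w ∈ simplex D, F1 U x w ≤ maxA x U := by
  have hnone_le : U none ≤ maxA x U :=
    Finset.le_sup' U (Finset.mem_insert_self _ _)
  have hsome_le : ∀ d : D, x d = 1 → U (some d) ≤ maxA x U := by
    intro d hd
    refine Finset.le_sup' U ?_
    exact Finset.mem_insert_of_mem (Finset.mem_image_of_mem _ (by simp [hd]))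
  constructor
  · obtain ⟨a, ha, hEq⟩ := Finset.exists_mem_eq_sup' (Afin_nonempty x) U
    refine ⟨indic a, ⟨fun g => by unfold indic; positivity, ?_⟩, ?_⟩
    · simp [indic]
    · have hF : F1 U x (indic a) = U a := by
        cases a with
        | none =>
          simp [F1, indic]
        | some d0 =>
          have hx0 : x d0 = 1 := by
            rcases Finset.mem_insert.mp ha with h | h
            · exact absurd h (by simp)
            · obtain ⟨d, hd, hde⟩ := Finset.mem_image.mp h
              cases hde
              exact (Finset.mem_filter.mp hd).2
          simp [F1, indic, Finset.sum_ite_eq', hx0]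
      rw [hF]; exact hEq.symm
  · rintro w ⟨hw0, hw1⟩
    have key : ∀ d : D, U (some d) * x d * w (some d) ≤ maxA x U * w (some d) := by
      intro d
      rcases hx d with h | h
      · rw [h]
        have := mul_nonneg (le_trans (hUpos none).le hnone_le) (hw0 (some d))
        simpa using this
      · rw [h, mul_one]
        exact mul_le_mul_of_nonneg_right (hsome_le d h) (hw0 (some d))
    calc F1 U x w ≤ ∑ d : D, maxA x U * w (some d) + maxA x U * w none := by
          refine add_le_add (Finset.sum_le_sum fun d _ => key d) ?_
          exact mul_le_mul_of_nonneg_right hnone_le (hw0 none)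
      _ = maxA x U * ∑ g : Option D, w g := by
          rw [Fintype.sum_option, mul_add, Finset.mul_sum]; ring
      _ = maxA x U := by rw [hw1, mul_one]

end
end

section
/- Let D be a finite type, x : D → ℝ binary, and U : Option D → ℝ with U g > 0 for every g : Option D. Then the maximum value of F₁ over Δ equals the maximum value of F₂ over W(x): any M that is the greatest element of {F₁(w) | w ∈ Δ} is also the greatest element of {F₂(w) | w ∈ W(x)}, and conversely. -/
noncomputable section

lemma maxA_pos {D : Type*} [Fintype D] [DecidableEq D] (x : D → ℝ)
    (U : Option D → ℝ) (hUpos : ∀ g, 0 < U g) : 0 < maxA x U :=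
  lt_of_lt_of_le (hUpos none)
    (Finset.le_sup' U (Finset.mem_insert_self _ _))

lemma le_maxA_of_open {D : Type*} [Fintype D] [DecidableEq D] (x : D → ℝ)
    (U : Option D → ℝ) {d : D} (hd : x d = 1) : U (some d) ≤ maxA x U := by
  apply Finset.le_sup'
  simp [Afin, hd]

lemma indic_sum {D : Type*} [Fintype D] [DecidableEq D] (a : Option D) :
    ∑ g : Option D, indic a g = 1 := by
  simp [indic, Finset.sum_ite_eq']

lemma greatest1 {D : Type*} [Fintype D] [DecidableEq D]
    (x : D → ℝ) (hx : ∀ d, x d = 0 ∨ x d = 1)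
    (U : Option D → ℝ) (hUpos : ∀ g, 0 < U g) :
    IsGreatest ((F1 U x) '' simplex D) (maxA x U) := by
  obtain ⟨a, ha, hEq⟩ := Finset.exists_mem_eq_sup' (Afin_nonempty x) U
  constructor
  · refine ⟨indic a, ⟨fun g => by unfold indic; positivity, indic_sum a⟩, ?_⟩
    have : F1 U x (indic a) = U a := by
      rcases Finset.mem_insert.mp ha with h | h
      · subst h
        simp [F1, indic]
      · obtain ⟨d, hd, rfl⟩ := Finset.mem_image.mp h
        have hxd : x d = 1 := (Finset.mem_filter.mp hd).2
        simp [F1, indic, mul_ite, Finset.sum_ite_eq', hxd]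
    rw [this]; exact hEq.symm
  · rintro y ⟨w, ⟨hw0, hw1⟩, rfl⟩
    have key : ∀ d : D, U (some d) * x d * w (some d) ≤ maxA x U * w (some d) := by
      intro d
      rcases hx d with h | h
      · rw [h]
        have := maxA_pos x U hUpos
        have := hw0 (some d)
        nlinarith
      · rw [h, mul_one]
        exact mul_le_mul_of_nonneg_right (le_maxA_of_open x U h) (hw0 _)
    have hnone : U none * w none ≤ maxA x U * w none :=
      mul_le_mul_of_nonneg_right
        (Finset.le_sup' U (Finset.mem_insert_self _ _)) (hw0 _)
    calc F1 U x w ≤ ∑ d : D, maxA x U * w (some d) + maxA x U * w none := by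
            exact add_le_add (Finset.sum_le_sum fun d _ => key d) hnone
      _ = maxA x U * ∑ g : Option D, w g := by
            rw [Fintype.sum_option, mul_add, Finset.mul_sum]; ring
      _ = maxA x U := by rw [hw1, mul_one]

lemma greatest2 {D : Type*} [Fintype D] [DecidableEq D]
    (x : D → ℝ) (hx : ∀ d, x d = 0 ∨ x d = 1)
    (U : Option D → ℝ) (hUpos : ∀ g, 0 < U g) :
    IsGreatest ((F2 U) '' Wset x) (maxA x U) := by
  obtain ⟨a, ha, hEq⟩ := Finset.exists_mem_eq_sup' (Afin_nonempty x) U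
  constructor
  · refine ⟨indic a, ⟨fun g => by unfold indic; positivity, indic_sum a, ?_⟩, ?_⟩
    · intro d
      unfold indic
      split
      · rename_i h
        subst h
        rcases Finset.mem_insert.mp ha with h' | h'
        · exact absurd h' (by simp)
        · obtain ⟨d', hd', he⟩ := Finset.mem_image.mp h'
          obtain rfl : d' = d := Option.some_inj.mp he
          rw [(Finset.mem_filter.mp hd').2]
      · rcases hx d with h | h <;> rw [h] <;> norm_num
    · have : F2 U (indic a) = U a := by
        simp [F2, indic, mul_ite, Finset.sum_ite_eq']
      rw [this]; exact hEq.symm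
  · rintro y ⟨w, ⟨hw0, hw1, hwx⟩, rfl⟩
    have key : ∀ g : Option D, U g * w g ≤ maxA x U * w g := by
      intro g
      match g with
      | none =>
        exact mul_le_mul_of_nonneg_right
          (Finset.le_sup' U (Finset.mem_insert_self _ _)) (hw0 _)
      | some d =>
        rcases hx d with h | h
        · have : w (some d) = 0 := le_antisymm (h ▸ hwx d) (hw0 _)
          rw [this]; simp
        · exact mul_le_mul_of_nonneg_right (le_maxA_of_open x U h) (hw0 _)
    calc F2 U w ≤ ∑ g : Option D, maxA x U * w g :=
            Finset.sum_le_sum fun g _ => key g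
      _ = maxA x U := by rw [← Finset.mul_sum, hw1, mul_one]

theorem stmt4 {D : Type*} [Fintype D]
    (x : D → ℝ) (hx : ∀ d, x d = 0 ∨ x d = 1)
    (U : Option D → ℝ) (hUpos : ∀ g, 0 < U g) (M : ℝ) :
    IsGreatest ((F1 U x) '' simplex D) M ↔ IsGreatest ((F2 U) '' Wset x) M := by
  classical
  constructor
  · intro h
    have := h.unique (greatest1 x hx U hUpos)
    rw [this]
    exact greatest2 x hx U hUpos
  · intro h
    have := h.unique (greatest2 x hx U hUpos)
    rw [this]
    exact greatest1 x hx U hUpos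

end
end

section
/- Let D be a finite type, x : D → ℝ binary, and U : Option D → ℝ injective. Let a* be the unique element of A(x) satisfying U a* = max_{a ∈ A(x)} U a. Then for every w ∈ W(x): w maximizes F₂ over W(x) (i.e., F₂(w) ≥ F₂(w') for all w' ∈ W(x)) if and only if w = e_{a*}. In particular, the maximizer of F₂ over W(x) is unique. -/
noncomputable section

-- aux lemmas
lemma vanish {D : Type*} [Fintype D] [DecidableEq D] (x : D → ℝ)
    (hx : ∀ d, x d = 0 ∨ x d = 1) (w : Option D → ℝ) (hw : w ∈ Wset x)
    {g : Option D} (hg : g ∉ Afin x) : w g = 0 := by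
  obtain ⟨hpos, hsum, hle⟩ := hw
  match g with
  | none => exact absurd (Finset.mem_insert_self _ _) hg
  | some d =>
    have hxd : x d = 0 := by
      rcases hx d with h | h
      · exact h
      · exact absurd (by simp [Afin, h]) hg
    have := hle d
    linarith [hpos (some d)]

lemma sum_on_Afin {D : Type*} [Fintype D] [DecidableEq D] (x : D → ℝ)
    (hx : ∀ d, x d = 0 ∨ x d = 1) (w : Option D → ℝ) (hw : w ∈ Wset x)
    (f : Option D → ℝ) :
    ∑ g : Option D, f g * w g = ∑ g ∈ Afin x, f g * w g := by
  rw [← Finset.sum_subset (Finset.subset_univ (Afin x))]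
  intro g _ hg
  rw [vanish x hx w hw hg, mul_zero]

lemma sum_w_Afin {D : Type*} [Fintype D] [DecidableEq D] (x : D → ℝ)
    (hx : ∀ d, x d = 0 ∨ x d = 1) (w : Option D → ℝ) (hw : w ∈ Wset x) :
    ∑ g ∈ Afin x, w g = 1 := by
  rw [← hw.2.1, ← Finset.sum_subset (Finset.subset_univ (Afin x))]
  intro g _ hg
  exact vanish x hx w hw hg

lemma indic_mem {D : Type*} [Fintype D] [DecidableEq D] (x : D → ℝ)
    (hx : ∀ d, x d = 0 ∨ x d = 1) (astar : Option D) (hastar : astar ∈ Afin x) :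
    indic astar ∈ Wset x := by
  refine ⟨fun g => by unfold indic; positivity, by simp [indic], fun d => ?_⟩
  unfold indic
  by_cases h : (some d : Option D) = astar
  · simp only [h, if_pos rfl]
    rcases hx d with h0 | h1
    · exfalso
      rw [← h] at hastar
      simp [Afin, h0] at hastar
    · simp [h1]
  · simp only [if_neg h]
    rcases hx d with h0 | h1
    · simp [h0]
    · simp [h1]

lemma F2_indic {D : Type*} [Fintype D] [DecidableEq D] (U : Option D → ℝ) (a : Option D) :
    F2 U (indic a) = U a := by
  simp [F2, indic, Finset.sum_ite_eq']

lemma F2_le_maxA {D : Type*} [Fintype D] [DecidableEq D] (x : D → ℝ)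
    (hx : ∀ d, x d = 0 ∨ x d = 1) (U : Option D → ℝ)
    (w : Option D → ℝ) (hw : w ∈ Wset x) : F2 U w ≤ maxA x U := by
  rw [F2, sum_on_Afin x hx w hw U]
  calc ∑ g ∈ Afin x, U g * w g ≤ ∑ g ∈ Afin x, maxA x U * w g := by
        apply Finset.sum_le_sum
        intro g hg
        exact mul_le_mul_of_nonneg_right (Finset.le_sup' U hg) (hw.1 g)
    _ = maxA x U := by rw [← Finset.mul_sum, sum_w_Afin x hx w hw, mul_one]

theorem stmt8 {D : Type*} [Fintype D] [DecidableEq D]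
    (x : D → ℝ) (hx : ∀ d, x d = 0 ∨ x d = 1)
    (U : Option D → ℝ) (hUinj : Function.Injective U)
    (astar : Option D) (hastar : astar ∈ Afin x) (hUastar : U astar = maxA x U)
    (w : Option D → ℝ) (hw : w ∈ Wset x) :
    (∀ w' ∈ Wset x, F2 U w' ≤ F2 U w) ↔ w = indic astar := by
  constructor
  · intro hmax
    have h1 : F2 U w = maxA x U := by
      have := hmax (indic astar) (indic_mem x hx astar hastar)
      rw [F2_indic, hUastar] at this
      exact le_antisymm (F2_le_maxA x hx U w hw) this
    -- ∑ over Afin of (maxA - U g) * w g = 0, terms nonneg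
    have hzero : ∀ g ∈ Afin x, g ≠ astar → w g = 0 := by
      intro g hg hne
      by_contra hwg
      have hwgpos : 0 < w g := lt_of_le_of_ne (hw.1 g) (Ne.symm hwg)
      have hUg : U g < maxA x U := by
        have hle := Finset.le_sup' U hg
        rcases lt_or_eq_of_le hle with h | h
        · exact h
        · exact absurd (hUinj (h.trans hUastar.symm).symm) hne.symm
      have hs : ∑ a ∈ Afin x, U a * w a < ∑ a ∈ Afin x, maxA x U * w a := by
        apply Finset.sum_lt_sum
        · intro a _; exact mul_le_mul_of_nonneg_right (Finset.le_sup' U ‹a ∈ Afin x›) (hw.1 a)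
        · exact ⟨g, hg, by nlinarith⟩
      rw [← Finset.mul_sum, sum_w_Afin x hx w hw, mul_one] at hs
      rw [F2, sum_on_Afin x hx w hw U] at h1
      linarith
    have hzero' : ∀ g, g ≠ astar → w g = 0 := by
      intro g hne
      by_cases hg : g ∈ Afin x
      · exact hzero g hg hne
      · exact vanish x hx w hw hg
    have hwa : w astar = 1 := by
      have := hw.2.1
      rw [← this, Finset.sum_eq_single astar (fun g _ hne => hzero' g hne) (by simp)]
    funext g
    by_cases hg : g = astar
    · simp [hg, hwa, indic]
    · simp [indic, hg, hzero' g hg]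
  · intro hweq w' hw'
    rw [hweq, F2_indic, hUastar]
    exact F2_le_maxA x hx U w' hw'

end
end

section
/- Let D be a finite type, x : D → ℝ binary, and U : Option D → ℝ. Then max_{a ∈ A(x)} U a is the least value of the dual objective γ + ∑_{d ∈ D} β d · x d over all dual-feasible pairs (γ, β): some dual-feasible pair attains this value, and every dual-feasible pair (γ, β) satisfies γ + ∑_{d ∈ D} β d · x d ≥ max_{a ∈ A(x)} U a. -/
noncomputable section

theorem stmt10 {D : Type*} [Fintype D] [DecidableEq D]
    (x : D → ℝ) (hx : ∀ d, x d = 0 ∨ x d = 1) (U : Option D → ℝ) :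
    (∃ (γ : ℝ) (β : D → ℝ),
        ((∀ d : D, 0 ≤ β d ∧ U (some d) ≤ γ + β d) ∧ U none ≤ γ) ∧
        γ + ∑ d : D, β d * x d = maxA x U) ∧
    ∀ (γ : ℝ) (β : D → ℝ),
        ((∀ d : D, 0 ≤ β d ∧ U (some d) ≤ γ + β d) ∧ U none ≤ γ) →
        maxA x U ≤ γ + ∑ d : D, β d * x d := by
  have hnone : (none : Option D) ∈ Afin x := Finset.mem_insert_self _ _
  have hmem : ∀ d : D, x d = 1 → (some d : Option D) ∈ Afin x := by
    intro d hd
    exact Finset.mem_insert_of_mem (Finset.mem_image_of_mem _ (by simp [hd]))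
  constructor
  · refine ⟨maxA x U, fun d => max (U (some d) - maxA x U) 0, ⟨⟨fun d => ⟨le_max_right _ _, ?_⟩,
      Finset.le_sup' U hnone⟩, ?_⟩⟩
    · have := le_max_left (U (some d) - maxA x U) 0
      linarith
    · have : ∑ d : D, max (U (some d) - maxA x U) 0 * x d = 0 := by
        apply Finset.sum_eq_zero
        intro d _
        rcases hx d with h | h
        · simp [h]
        · have : U (some d) ≤ maxA x U := Finset.le_sup' U (hmem d h)
          simp [h, max_eq_right (by linarith : U (some d) - maxA x U ≤ 0)]
      rw [this]; ring
  · rintro γ β ⟨hβ, hγ⟩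
    have hsum : 0 ≤ ∑ d : D, β d * x d := Finset.sum_nonneg fun d _ => by
      rcases hx d with h | h
      · simp [h]
      · simpa [h] using (hβ d).1
    apply Finset.sup'_le
    intro a ha
    rcases Finset.mem_insert.mp ha with rfl | ha
    · linarith
    · obtain ⟨d, hd, rfl⟩ := Finset.mem_image.mp ha
      have hd1 : x d = 1 := (Finset.mem_filter.mp hd).2
      have key : β d ≤ ∑ e : D, β e * x e := by
        have := Finset.single_le_sum (f := fun e => β e * x e)
          (fun e _ => by rcases hx e with h | h
                         · simp [h]
                         · simpa [h] using (hβ e).1) (Finset.mem_univ d)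
        simpa [hd1] using this
      have := (hβ d).2
      linarith

end
end

section
/- Let D be a finite type and let U, U' : Option D → ℝ induce the same ranking of options, i.e., for all g, h : Option D, U g ≤ U h if and only if U' g ≤ U' h. Then for every binary x : D → ℝ and every w ∈ W(x): w maximizes ∑_{g : Option D} U g · w g over W(x) if and only if w maximizes ∑_{g : Option D} U' g · w g over W(x). (Hence scenarios whose utility vectors have the same ranking can be aggregated into one pattern.) -/
noncomputable section

lemma mem_Afin_of_pos {D : Type*} [Fintype D] [DecidableEq D] {x : D → ℝ}
    (hx : ∀ d, x d = 0 ∨ x d = 1) {w : Option D → ℝ} (hw : w ∈ Wset x)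
    {g : Option D} (hg : 0 < w g) : g ∈ Afin x := by
  cases g with
  | none => exact Finset.mem_insert_self _ _
  | some d =>
    rcases hx d with h | h
    · exact absurd (hw.2.2 d) (by rw [h]; linarith)
    · exact Finset.mem_insert_of_mem (Finset.mem_image.2 ⟨d, by simp [h], rfl⟩)

lemma sum_le_maxA {D : Type*} [Fintype D] [DecidableEq D] {x : D → ℝ}
    (hx : ∀ d, x d = 0 ∨ x d = 1) (U : Option D → ℝ) {w : Option D → ℝ}
    (hw : w ∈ Wset x) : ∑ g : Option D, U g * w g ≤ maxA x U := by
  have h : ∑ g : Option D, U g * w g ≤ ∑ g : Option D, maxA x U * w g := by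
    apply Finset.sum_le_sum
    intro g _
    rcases lt_or_eq_of_le (hw.1 g) with h | h
    · exact mul_le_mul_of_nonneg_right
        (Finset.le_sup' U (mem_Afin_of_pos hx hw h)) (le_of_lt h)
    · rw [← h]; ring_nf; exact le_refl _
  calc ∑ g : Option D, U g * w g ≤ ∑ g : Option D, maxA x U * w g := h
    _ = maxA x U := by rw [← Finset.mul_sum, hw.2.1, mul_one]

lemma exists_achieve {D : Type*} [Fintype D] [DecidableEq D] {x : D → ℝ}
    (hx : ∀ d, x d = 0 ∨ x d = 1) (U : Option D → ℝ) :
    ∃ w' ∈ Wset x, ∑ g : Option D, U g * w' g = maxA x U := by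
  obtain ⟨a, ha, hUa⟩ := Finset.exists_mem_eq_sup' (Afin_nonempty x) U
  refine ⟨indic a, ⟨?_, ?_, ?_⟩, ?_⟩
  · intro g; unfold indic; split <;> norm_num
  · simp [indic]
  · intro d
    unfold indic
    by_cases h : (some d : Option D) = a
    · subst h
      rcases Finset.mem_insert.1 ha with h | h
      · exact absurd h (by simp)
      · obtain ⟨e, he, heq⟩ := Finset.mem_image.1 h
        obtain rfl : e = d := Option.some_injective _ heq
        simp_all
    · simp only [if_neg h]
      rcases hx d with h' | h' <;> rw [h'] <;> norm_num
  · unfold maxA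
    rw [hUa]
    simp [indic, Finset.sum_ite_eq']

lemma maximizer_iff {D : Type*} [Fintype D] [DecidableEq D] {x : D → ℝ}
    (hx : ∀ d, x d = 0 ∨ x d = 1) (U : Option D → ℝ) {w : Option D → ℝ}
    (hw : w ∈ Wset x) :
    (∀ w' ∈ Wset x, ∑ g : Option D, U g * w' g ≤ ∑ g : Option D, U g * w g) ↔
    (∀ g, 0 < w g → U g = maxA x U) := by
  constructor
  · intro hmax
    have heq : ∑ g : Option D, U g * w g = maxA x U := by
      obtain ⟨w', hw', h'⟩ := exists_achieve hx U
      exact le_antisymm (sum_le_maxA hx U hw) (h' ▸ hmax w' hw')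
    -- ∑ (maxA - U g) * w g = 0
    have hzero : ∑ g : Option D, (maxA x U - U g) * w g = 0 := by
      have : ∑ g : Option D, (maxA x U - U g) * w g
          = maxA x U * (∑ g : Option D, w g) - ∑ g : Option D, U g * w g := by
        rw [Finset.mul_sum, ← Finset.sum_sub_distrib]
        exact Finset.sum_congr rfl (fun g _ => by ring)
      rw [this, hw.2.1, heq]; ring
    have hnn : ∀ g ∈ Finset.univ, 0 ≤ (maxA x U - U g) * w g := by
      intro g _
      rcases lt_or_eq_of_le (hw.1 g) with h | h
      · have := Finset.le_sup' U (mem_Afin_of_pos hx hw h)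
        have : (0:ℝ) ≤ maxA x U - U g := by unfold maxA; linarith
        positivity
      · rw [← h]; ring_nf; exact le_refl _
    intro g hg
    have := (Finset.sum_eq_zero_iff_of_nonneg hnn).1 hzero g (Finset.mem_univ g)
    rcases mul_eq_zero.1 this with h | h
    · linarith
    · linarith
  · intro hsupp w' hw'
    have : ∑ g : Option D, U g * w g = maxA x U := by
      have : ∑ g : Option D, U g * w g = ∑ g : Option D, maxA x U * w g := by
        apply Finset.sum_congr rfl
        intro g _
        rcases lt_or_eq_of_le (hw.1 g) with h | h
        · rw [hsupp g h]
        · rw [← h]; ring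
      rw [this, ← Finset.mul_sum, hw.2.1, mul_one]
    rw [this]
    exact sum_le_maxA hx U hw'

theorem stmt13 {D : Type*} [Fintype D]
    (U U' : Option D → ℝ)
    (hrank : ∀ g h : Option D, U g ≤ U h ↔ U' g ≤ U' h)
    (x : D → ℝ) (hx : ∀ d, x d = 0 ∨ x d = 1)
    (w : Option D → ℝ) (hw : w ∈ Wset x) :
    (∀ w' ∈ Wset x, ∑ g : Option D, U g * w' g ≤ ∑ g : Option D, U g * w g) ↔
    (∀ w' ∈ Wset x, ∑ g : Option D, U' g * w' g ≤ ∑ g : Option D, U' g * w g) := by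
  classical
  rw [maximizer_iff hx U hw, maximizer_iff hx U' hw]
  have key : ∀ (V : Option D → ℝ) (g : Option D), g ∈ Afin x →
      (V g = maxA x V ↔ ∀ a ∈ Afin x, V a ≤ V g) := by
    intro V g hg
    constructor
    · intro h a ha
      rw [h]; exact Finset.le_sup' V ha
    · intro h
      exact le_antisymm (Finset.le_sup' V hg) (Finset.sup'_le _ _ h)
  constructor <;> intro H g hg <;>
    have hmem := mem_Afin_of_pos hx hw hg
  · rw [key U' g hmem]
    intro a ha
    rw [← hrank]
    exact ((key U g hmem).1 (H g hg)) a ha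
  · rw [key U g hmem]
    intro a ha
    rw [hrank]
    exact ((key U' g hmem).1 (H g hg)) a ha


end
end
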